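/- Let p, q ∈ (0,1) be constants with q > max{ (3 − p − √((3 − p)² − 4p))/2 , 2p − 1 }. Then, with high probability (as n → ∞ along even n), for G drawn from the stochastic block model 𝒢_{n,p,q} the metric LP relaxation fails to recover the planted bisection: the cut vector of the planted bisection is not the unique optimal solution of (LP-P). -/

import Mathlib

/-!
The LP loses to a fractional point. Put within-part non-edges at `1/4`, within-part edges at
`1/8`, and cross pairs at `1 - (β + h)/8` (edges) or `1 - β/8` (non-edges), with `β` fixed by
the equipartition constraint. For `0 ≤ h ≤ 1 ≤ β ≤ 2` this point satisfies all triangle and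
perimeter inequalities (only the side pattern of a triangle matters), and it beats the planted
cut, whose value is the number `e_cr` of cross edges, exactly when `e_in < (β + h) e_cr`.
By Chebyshev the within- and cross-edge densities concentrate at `p` and `q`, so `β → 2 - p - h q`
and both requirements become `p + h q < 1` and `p < q (2 - p + h (1 - q))`; the hypothesis on `q`
is what makes them hold simultaneously for some `h ∈ [0, 1]`.
-/

open MeasureTheory Filter

noncomputable section
open scoped Classical ENNReal

/-- `i` and `j` lie on the same side of the planted bisection
`V₁ = {0, …, n/2 - 1}`, `V₂ = {n/2, …, n-1}`. -/
def sameSide (n : ℕ) (i j : Fin n) : Prop :=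
  ((i : ℕ) < n / 2 ↔ (j : ℕ) < n / 2)

/-- The sum of `f i j` over all unordered pairs `{i, j}` with `i < j`. -/
def pairSum (n : ℕ) (f : Fin n → Fin n → ℝ) : ℝ :=
  ∑ i : Fin n, ∑ j : Fin n, if i < j then f i j else 0

/-- Feasibility for the metric LP relaxation (LP-P): symmetry of the indexing by
unordered pairs, the triangle inequalities, the perimeter inequalities, and the
equipartition equality constraint. -/
def LPfeasible (n : ℕ) (x : Fin n → Fin n → ℝ) : Prop :=
  (∀ i j, x i j = x j i) ∧
  (∀ i j k : Fin n, i ≠ j → i ≠ k → j ≠ k → x i j ≤ x i k + x j k) ∧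
  (∀ i j k : Fin n, i < j → j < k → x i j + x i k + x j k ≤ 2) ∧
  pairSum n x = (n : ℝ) ^ 2 / 4

/-- The objective function of (LP-P): `∑_{(i,j) ∈ E} x_{ij}`, each edge counted once. -/
def LPobj (n : ℕ) (G : SimpleGraph (Fin n)) (x : Fin n → Fin n → ℝ) : ℝ :=
  ∑ i : Fin n, ∑ j : Fin n, if i < j ∧ G.Adj i j then x i j else 0

/-- The cut vector of the bisection `(S, Sᶜ)`. -/
def cutVecOf {n : ℕ} (S : Finset (Fin n)) : Fin n → Fin n → ℝ :=
  fun i j => if (i ∈ S ↔ j ∈ S) then 0 else 1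

/-- The cut vector of the planted bisection `V₁ = {0, …, n/2 - 1}`, `V₂ = {n/2, …, n-1}`. -/
def cutVec (n : ℕ) : Fin n → Fin n → ℝ :=
  fun i j => if sameSide n i j then 0 else 1

/-- The LP relaxation (LP-P) for the graph `G` recovers the bisection with cut vector
`xb`: `xb` is feasible, and it is the unique optimal solution (any feasible point
with the same objective value agrees with `xb` on all off-diagonal entries). -/
def LPrecoversOf (n : ℕ) (G : SimpleGraph (Fin n)) (xb : Fin n → Fin n → ℝ) : Prop :=
  LPfeasible n xb ∧
  ∀ x : Fin n → Fin n → ℝ, LPfeasible n x →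
    LPobj n G xb ≤ LPobj n G x ∧
    (LPobj n G x = LPobj n G xb → ∀ i j : Fin n, i ≠ j → x i j = xb i j)

/-- The LP relaxation (LP-P) for `G` recovers the planted bisection
`V₁ = {0, …, n/2 - 1}`, `V₂ = {n/2, …, n-1}`. -/
def LPrecovers (n : ℕ) (G : SimpleGraph (Fin n)) : Prop :=
  LPrecoversOf n G (cutVec n)

/-- The Bernoulli measure on `Bool` with success probability `p` (a real number,
truncated to `[0,1]`). -/
def bern (p : ℝ) : MeasureTheory.Measure Bool :=
  (PMF.bernoulli (min (Real.toNNReal p) 1) (min_le_right _ _)).toMeasure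

instance (p : ℝ) : MeasureTheory.IsProbabilityMeasure (bern p) :=
  PMF.toMeasure.isProbabilityMeasure _

/-- The distribution of a random graph on `Fin n` in which, independently for every
ordered pair `(i, j)` with `i < j`, the pair is an edge with probability `pe (i, j)`:
the product of Bernoulli measures on the family of edge indicators. -/
def graphMeasure (n : ℕ) (pe : Fin n × Fin n → ℝ) :
    MeasureTheory.Measure (Fin n × Fin n → Bool) :=
  MeasureTheory.Measure.pi (fun ij => bern (pe ij))

/-- The graph on `Fin n` determined by the edge indicators `ω`: `i` and `j` are
adjacent iff the indicator of the ordered pair `(min i j, max i j)` is `true`. -/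
def graphOf {n : ℕ} (ω : Fin n × Fin n → Bool) : SimpleGraph (Fin n) :=
  SimpleGraph.fromRel (fun i j => i < j ∧ ω (i, j) = true)

/-- Edge probabilities of the Erdős–Rényi model `𝒢_{n,p}`. -/
def erPe (n : ℕ) (p : ℝ) : Fin n × Fin n → ℝ :=
  fun ij => if ij.1 < ij.2 then p else 0

/-- Edge probabilities of the stochastic block model `𝒢_{n,p,q}` with planted
bisection `V₁ = {0, …, n/2 - 1}`, `V₂ = {n/2, …, n-1}`: each pair of nodes within
`V₁` or within `V₂` is an edge with probability `p`, and each pair with one node in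
`V₁` and one in `V₂` is an edge with probability `q`. -/
def sbmPe (n : ℕ) (p q : ℝ) : Fin n × Fin n → ℝ :=
  fun ij => if ij.1 < ij.2 then (if sameSide n ij.1 ij.2 then p else q) else 0

/-- Edge probabilities of the bipartite Erdős–Rényi model `𝒢_{n,0,q}`. -/
def bipPe (n : ℕ) (q : ℝ) : Fin n × Fin n → ℝ := sbmPe n 0 q

open Finset ProbabilityTheory Topology

section Concentration

variable {ι : Type*} [Fintype ι]

def countTrue (S : Finset ι) (ω : ι → Bool) : ℕ := #{s ∈ S | ω s = true}

lemma integral_indicator_true_bern {r : ℝ} (h0 : 0 ≤ r) (h1 : r ≤ 1) :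
    ∫ b, (if b = true then (1 : ℝ) else 0) ∂bern r = r := by
  rw [integral_fintype .of_finite]
  simp only [Fintype.sum_bool, if_true, smul_eq_mul, mul_one, mul_zero, add_zero,
    Bool.false_eq_true, if_false, measureReal_def, bern]
  rw [PMF.toMeasure_apply_singleton _ _ (measurableSet_singleton _), PMF.bernoulli_apply,
    cond_true, min_eq_left (Real.toNNReal_le_one.mpr h1)]
  simp [h0]

lemma measure_abs_countTrue_sub_ge_le (pe : ι → ℝ) (S : Finset ι) {r : ℝ}
    (hr : ∀ s ∈ S, pe s = r) (h0 : 0 ≤ r) (h1 : r ≤ 1) {c : ℝ} (hc : 0 < c) :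
    Measure.pi (fun s => bern (pe s)) {ω | c ≤ |(countTrue S ω : ℝ) - r * #S|}
      ≤ ENNReal.ofReal (#S / (4 * c ^ 2)) := by
  set μ := Measure.pi (fun s => bern (pe s))
  set X : ι → (ι → Bool) → ℝ := fun s ω => if ω s = true then 1 else 0
  have hcount : (fun ω => (countTrue S ω : ℝ)) = ∑ s ∈ S, X s := by
    ext ω
    simp [countTrue, X, Finset.sum_apply]
  have hmem : ∀ s, MemLp (X s) 2 μ := fun s =>
    MemLp.of_bound (measurable_of_finite _).aestronglyMeasurable 1
      (ae_of_all _ fun ω => by by_cases h : ω s = true <;> simp [X, h])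
  have hindep : iIndepFun X μ :=
    iIndepFun_pi (X := fun _ b => if b = true then (1 : ℝ) else 0)
      fun _ => (measurable_of_finite _).aemeasurable
  have hmean : μ[∑ s ∈ S, X s] = r * #S := by
    simp_rw [Finset.sum_apply]
    rw [integral_finsetSum _ fun s _ => (hmem s).integrable one_le_two]
    calc ∑ s ∈ S, ∫ ω, X s ω ∂μ = ∑ _s ∈ S, r := sum_congr rfl fun s hs => by
          rw [integral_comp_eval (μ := fun s => bern (pe s))
            (f := fun b => if b = true then (1 : ℝ) else 0)
            (measurable_of_finite _).aestronglyMeasurable, hr s hs,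
            integral_indicator_true_bern h0 h1]
      _ = r * #S := by simp [mul_comm]
  have hvar : variance (∑ s ∈ S, X s) μ ≤ #S / 4 := by
    rw [IndepFun.variance_sum (fun s _ => hmem s)
      fun s _ t _ hst => hindep.indepFun hst]
    calc ∑ s ∈ S, variance (X s) μ ≤ ∑ _s ∈ S, ((1 - 0) / 2 : ℝ) ^ 2 :=
          sum_le_sum fun s _ => variance_le_sq_of_bounded
            (ae_of_all _ fun ω => by by_cases h : ω s = true <;> simp [X, h])
            (measurable_of_finite _).aemeasurable
      _ = #S / 4 := by simp; ring
  have hcheb := meas_ge_le_variance_div_sq (memLp_finsetSum' S fun s _ => hmem s) hc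
  rw [← hcount] at hcheb hmean hvar
  rw [hmean] at hcheb
  refine hcheb.trans (ENNReal.ofReal_le_ofReal ?_)
  calc variance (fun ω => (countTrue S ω : ℝ)) μ / c ^ 2 ≤ #S / 4 / c ^ 2 := by gcongr
    _ = #S / (4 * c ^ 2) := by ring

lemma tendsto_measure_abs_countTrue_div_sub_ge {ι : ℕ → Type*} [∀ m, Fintype (ι m)]
    (pe : ∀ m, ι m → ℝ) (S : ∀ m, Finset (ι m)) {r : ℝ} (hr : ∀ m, ∀ s ∈ S m, pe m s = r)
    (h0 : 0 ≤ r) (h1 : r ≤ 1) (hS : Tendsto (fun m => #(S m)) atTop atTop) {ε : ℝ}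
    (hε : 0 < ε) :
    Tendsto (fun m => Measure.pi (fun s => bern (pe m s))
      {ω | ε ≤ |(countTrue (S m) ω : ℝ) / #(S m) - r|}) atTop (𝓝 0) := by
  have hbound : Tendsto (fun m => ENNReal.ofReal (1 / (4 * ε ^ 2 * #(S m)))) atTop (𝓝 0) := by
    rw [← ENNReal.ofReal_zero]
    exact ENNReal.tendsto_ofReal <| tendsto_const_nhds.div_atTop <|
      (tendsto_natCast_atTop_atTop.comp hS).const_mul_atTop (by positivity)
  refine tendsto_of_tendsto_of_tendsto_of_le_of_le' tendsto_const_nhds hbound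
    (.of_forall fun _ => zero_le) ?_
  filter_upwards [hS.eventually_ge_atTop 1] with m hm
  have hN : (0 : ℝ) < #(S m) := by exact_mod_cast hm
  have hset : {ω | ε ≤ |(countTrue (S m) ω : ℝ) / #(S m) - r|}
      = {ω | ε * #(S m) ≤ |(countTrue (S m) ω : ℝ) - r * #(S m)|} := by
    ext ω
    rw [Set.mem_ofPred_eq, Set.mem_ofPred_eq, ← le_div_iff₀ hN, ← abs_of_pos hN, ← abs_div,
      abs_of_pos hN, sub_div, mul_div_cancel_right₀ _ hN.ne']
  rw [hset]
  refine (measure_abs_countTrue_sub_ge_le _ _ (hr m) h0 h1 (by positivity)).trans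
    (ENNReal.ofReal_le_ofReal (le_of_eq ?_))
  field_simp

lemma tendsto_measure_one_of_compl_union_subset {Ω : ℕ → Type*}
    [∀ m, MeasurableSpace (Ω m)] {μ : ∀ m, Measure (Ω m)} [∀ m, IsProbabilityMeasure (μ m)]
    {A B E : ∀ m, Set (Ω m)} (hA : Tendsto (fun m => μ m (A m)) atTop (𝓝 0))
    (hB : Tendsto (fun m => μ m (B m)) atTop (𝓝 0)) (hE : ∀ᶠ m in atTop, (A m ∪ B m)ᶜ ⊆ E m) :
    Tendsto (fun m => μ m (E m)) atTop (𝓝 1) := by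
  have hlow : Tendsto (fun m => 1 - (μ m (A m) + μ m (B m))) atTop (𝓝 1) := by
    have := ENNReal.Tendsto.sub tendsto_const_nhds (by simpa using hA.add hB)
      (.inl ENNReal.one_ne_top)
    rwa [tsub_zero] at this
  refine tendsto_of_tendsto_of_tendsto_of_le_of_le' hlow tendsto_const_nhds ?_
    (.of_forall fun _ => prob_le_one)
  filter_upwards [hE] with m hm
  rw [tsub_le_iff_right, add_comm]
  calc 1 = μ m (A m ∪ B m ∪ (A m ∪ B m)ᶜ) := by rw [Set.union_compl_self, measure_univ]
    _ ≤ μ m (A m) + μ m (B m) + μ m (E m) :=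
      (measure_union_le _ _).trans (add_le_add (measure_union_le _ _) (measure_mono hm))

end Concentration

section Pairs

variable {n : ℕ}

def withinPairs (n : ℕ) : Finset (Fin n × Fin n) := {e | e.1 < e.2 ∧ sameSide n e.1 e.2}

def crossPairs (n : ℕ) : Finset (Fin n × Fin n) := {e | e.1 < e.2 ∧ ¬ sameSide n e.1 e.2}

lemma sameSide_two_mul_iff {m : ℕ} {i j : Fin (2 * m)} :
    sameSide (2 * m) i j ↔ ((i : ℕ) < m ↔ (j : ℕ) < m) := by
  rw [sameSide, Nat.mul_div_cancel_left m two_pos]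

lemma card_crossPairs (m : ℕ) : #(crossPairs (2 * m)) = m * m := by
  have : crossPairs (2 * m) =
      (univ.filter fun i : Fin (2 * m) => (i : ℕ) < m) ×ˢ
        (univ.filter fun j : Fin (2 * m) => ¬ (j : ℕ) < m) := by
    ext ⟨i, j⟩
    simp only [crossPairs, sameSide_two_mul_iff, mem_filter, mem_univ, true_and, mem_product,
      Fin.lt_def]
    omega
  rw [this, card_product, filter_not, card_sdiff_of_subset (filter_subset _ _),
    Fin.card_filter_val_lt, card_univ, Fintype.card_fin, min_eq_right (by omega),
    Nat.two_mul, Nat.add_sub_cancel]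

lemma card_withinPairs (m : ℕ) : (#(withinPairs (2 * m)) : ℝ) = m * m - m := by
  have htotal : #(withinPairs (2 * m)) + #(crossPairs (2 * m)) = (2 * m).choose 2 := by
    rw [withinPairs, crossPairs, ← filter_filter, ← filter_filter,
      card_filter_add_card_filter_not, Fintype.card_product_filter_lt, Fintype.card_fin]
  have := congrArg (Nat.cast (R := ℝ)) htotal
  push_cast [Nat.cast_choose_two, card_crossPairs] at this
  linarith

lemma tendsto_card_withinPairs : Tendsto (fun m => #(withinPairs (2 * m))) atTop atTop := by
  rw [← tendsto_natCast_atTop_iff (R := ℝ)]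
  simp_rw [card_withinPairs]
  refine tendsto_atTop_mono' _ ?_ tendsto_natCast_atTop_atTop
  filter_upwards [eventually_ge_atTop 2] with m hm
  have : (2 : ℝ) ≤ m := by exact_mod_cast hm
  nlinarith

lemma tendsto_card_crossPairs : Tendsto (fun m => #(crossPairs (2 * m))) atTop atTop := by
  simp_rw [card_crossPairs]
  exact tendsto_atTop_mono Nat.le_mul_self tendsto_id

lemma sbmPe_of_mem_withinPairs (p q : ℝ) {e : Fin n × Fin n} (he : e ∈ withinPairs n) :
    sbmPe n p q e = p := by
  simp_all [withinPairs, sbmPe]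

lemma sbmPe_of_mem_crossPairs (p q : ℝ) {e : Fin n × Fin n} (he : e ∈ crossPairs n) :
    sbmPe n p q e = q := by
  simp_all [crossPairs, sbmPe]

lemma pairSum_eq_sum_withinPairs_add_sum_crossPairs (f : Fin n → Fin n → ℝ) :
    pairSum n f = ∑ e ∈ withinPairs n, f e.1 e.2 + ∑ e ∈ crossPairs n, f e.1 e.2 := by
  rw [pairSum, ← sum_product', univ_product_univ, ← sum_filter, withinPairs, crossPairs,
    ← filter_filter, ← filter_filter, sum_filter_add_sum_filter_not]

end Pairs

section Perturbation

variable {n : ℕ} (G : SimpleGraph (Fin n))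

def edgesIn (S : Finset (Fin n × Fin n)) : ℕ := #{e ∈ S | G.Adj e.1 e.2}

lemma sum_add_mul_adjMatrix (S : Finset (Fin n × Fin n)) (a b : ℝ) :
    ∑ e ∈ S, (a + b * G.adjMatrix ℝ e.1 e.2) = a * #S + b * edgesIn G S := by
  rw [sum_add_distrib, ← mul_sum, sum_const, nsmul_eq_mul, edgesIn, natCast_card_filter]
  simp only [SimpleGraph.adjMatrix_apply]
  ring

lemma pairSum_eq_of_affine_adjMatrix {f : Fin n → Fin n → ℝ} {a b c d : ℝ}
    (hw : ∀ e ∈ withinPairs n, f e.1 e.2 = a + b * G.adjMatrix ℝ e.1 e.2)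
    (hc : ∀ e ∈ crossPairs n, f e.1 e.2 = c + d * G.adjMatrix ℝ e.1 e.2) :
    pairSum n f = a * #(withinPairs n) + b * edgesIn G (withinPairs n)
      + (c * #(crossPairs n) + d * edgesIn G (crossPairs n)) := by
  rw [pairSum_eq_sum_withinPairs_add_sum_crossPairs, sum_congr rfl hw, sum_congr rfl hc,
    sum_add_mul_adjMatrix, sum_add_mul_adjMatrix]

lemma LPobj_eq_pairSum (x : Fin n → Fin n → ℝ) :
    LPobj n G x = pairSum n fun i j => G.adjMatrix ℝ i j * x i j := by
  simp only [LPobj, pairSum, SimpleGraph.adjMatrix_apply, ite_mul, one_mul, zero_mul, ite_and]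

lemma not_LPrecovers_of_LPobj_lt {x : Fin n → Fin n → ℝ} (hx : LPfeasible n x)
    (hlt : LPobj n G x < LPobj n G (cutVec n)) : ¬ LPrecovers n G :=
  fun ⟨_, hopt⟩ => (hopt x hx).1.not_gt hlt

lemma LPobj_cutVec : LPobj n G (cutVec n) = edgesIn G (crossPairs n) := by
  rw [LPobj_eq_pairSum, pairSum_eq_of_affine_adjMatrix G (a := 0) (b := 0) (c := 0) (d := 1)]
  · ring
  all_goals intro e he; simp_all [withinPairs, crossPairs, cutVec]

def perturbedCut (h β : ℝ) : Fin n → Fin n → ℝ := fun i j =>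
  if sameSide n i j then (2 - G.adjMatrix ℝ i j) / 8 else 1 - (β + h * G.adjMatrix ℝ i j) / 8

variable {G} {h β : ℝ}

lemma perturbedCut_mem_Icc (hh0 : 0 ≤ h) (i j : Fin n) :
    (sameSide n i j ∧ perturbedCut G h β i j ∈ Set.Icc (1 / 8) (1 / 4)) ∨
      (¬ sameSide n i j ∧ perturbedCut G h β i j ∈ Set.Icc (1 - (β + h) / 8) (1 - β / 8)) := by
  by_cases hs : sameSide n i j <;> [left; right] <;> refine ⟨hs, ?_, ?_⟩ <;>
    by_cases hij : G.Adj i j <;> simp [perturbedCut, hs, hij] <;> linarith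

lemma perturbedCut_feasible (hh0 : 0 ≤ h) (hh1 : h ≤ 1) (hβ1 : 1 ≤ β) (hβ2 : β ≤ 2)
    (hsum : pairSum n (perturbedCut G h β) = (n : ℝ) ^ 2 / 4) :
    LPfeasible n (perturbedCut G h β) := by
  refine ⟨fun i j => ?_, fun i j k _ _ _ => ?_, fun i j k _ _ => ?_, hsum⟩
  · simp only [perturbedCut, sameSide, iff_comm, G.adjMatrix_apply, SimpleGraph.adj_comm]
  all_goals
    rcases perturbedCut_mem_Icc (G := G) (β := β) hh0 i j with ⟨hij, hij₁, hij₂⟩ | ⟨hij, hij₁, hij₂⟩ <;>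
    rcases perturbedCut_mem_Icc (G := G) (β := β) hh0 i k with ⟨hik, hik₁, hik₂⟩ | ⟨hik, hik₁, hik₂⟩ <;>
    rcases perturbedCut_mem_Icc (G := G) (β := β) hh0 j k with ⟨hjk, hjk₁, hjk₂⟩ | ⟨hjk, hjk₁, hjk₂⟩ <;>
    first | linarith | (simp only [sameSide] at hij hik hjk; tauto)

lemma pairSum_perturbedCut :
    pairSum n (perturbedCut G h β) = 1 / 4 * #(withinPairs n) - 1 / 8 * edgesIn G (withinPairs n)
      + ((1 - β / 8) * #(crossPairs n) - h / 8 * edgesIn G (crossPairs n)) := by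
  rw [pairSum_eq_of_affine_adjMatrix G (a := 1 / 4) (b := -1 / 8) (c := 1 - β / 8) (d := -(h / 8))]
  · ring
  all_goals
    intro e he
    by_cases hadj : G.Adj e.1 e.2 <;> simp_all [withinPairs, crossPairs, perturbedCut] <;> ring

lemma LPobj_perturbedCut :
    LPobj n G (perturbedCut G h β)
      = 1 / 8 * edgesIn G (withinPairs n) + (1 - (β + h) / 8) * edgesIn G (crossPairs n) := by
  rw [LPobj_eq_pairSum, pairSum_eq_of_affine_adjMatrix G (a := 0) (b := 1 / 8) (c := 0)
    (d := 1 - (β + h) / 8)]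
  · ring
  all_goals
    intro e he
    by_cases hadj : G.Adj e.1 e.2 <;> simp_all [withinPairs, crossPairs, perturbedCut] <;> ring

end Perturbation

lemma not_LPrecovers_of_edgesIn {m : ℕ} (G : SimpleGraph (Fin (2 * m))) {h β : ℝ}
    (hh0 : 0 ≤ h) (hh1 : h ≤ 1) (hβ1 : 1 ≤ β) (hβ2 : β ≤ 2)
    (hbal : (edgesIn G (withinPairs (2 * m)) : ℝ) + β * (m * m)
      + h * edgesIn G (crossPairs (2 * m)) = 2 * (m * m - m))
    (hgain : (edgesIn G (withinPairs (2 * m)) : ℝ) < (β + h) * edgesIn G (crossPairs (2 * m))) :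
    ¬ LPrecovers (2 * m) G := by
  refine not_LPrecovers_of_LPobj_lt G (perturbedCut_feasible (G := G) hh0 hh1 hβ1 hβ2 ?_) ?_
  · rw [pairSum_perturbedCut, card_withinPairs, card_crossPairs]
    push_cast
    linarith
  · rw [LPobj_perturbedCut, LPobj_cutVec]
    linarith

lemma edgesIn_graphOf {n : ℕ} (ω : Fin n × Fin n → Bool) {S : Finset (Fin n × Fin n)}
    (hS : ∀ e ∈ S, e.1 < e.2) : edgesIn (graphOf ω) S = countTrue S ω := by
  refine congrArg card (filter_congr fun e he => ?_)
  simp [graphOf, (hS e he).ne, hS e he, not_lt_of_gt (hS e he)]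

/-- The `β` for which `perturbedCut` meets the equipartition constraint when the within- and
cross-edge densities are `a` and `b` and `t = 1 / m`. -/
def balancingShift (h a b t : ℝ) : ℝ := (2 - a) * (1 - t) - h * b

lemma not_LPrecovers_graphOf_of_balancingShift {m : ℕ} (hm : 2 ≤ m)
    (ω : Fin (2 * m) × Fin (2 * m) → Bool) {h a b : ℝ} (hh0 : 0 ≤ h) (hh1 : h ≤ 1)
    (ha : a = countTrue (withinPairs (2 * m)) ω / #(withinPairs (2 * m)))
    (hb : b = countTrue (crossPairs (2 * m)) ω / #(crossPairs (2 * m)))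
    (hβ1 : 1 ≤ balancingShift h a b (1 / m)) (hβ2 : balancingShift h a b (1 / m) ≤ 2)
    (hgain : a * (1 - 1 / m) < (balancingShift h a b (1 / m) + h) * b) :
    ¬ LPrecovers (2 * m) (graphOf ω) := by
  have hm' : (2 : ℝ) ≤ m := by exact_mod_cast hm
  have hW : (0 : ℝ) < m * m - m := by nlinarith
  rw [card_withinPairs, eq_div_iff hW.ne'] at ha
  rw [card_crossPairs, Nat.cast_mul, eq_div_iff (by positivity)] at hb
  refine not_LPrecovers_of_edgesIn (graphOf ω) hh0 hh1 hβ1 hβ2 ?_ ?_ <;>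
    rw [edgesIn_graphOf ω (fun e he => (mem_filter.1 he).2.1),
      edgesIn_graphOf ω (fun e he => (mem_filter.1 he).2.1), ← ha, ← hb]
  · unfold balancingShift
    field_simp
    ring
  · have hm0 : (0 : ℝ) < m * m := by positivity
    calc a * (m * m - m) = a * (1 - 1 / m) * (m * m) := by field_simp
      _ < (balancingShift h a b (1 / m) + h) * b * (m * m) := by gcongr
      _ = _ := by ring

lemma exists_pos_balancingShift_bounds {p q h : ℝ} (hpos : 0 < p + h * q)
    (hcut : p + h * q < 1) (hgain : p < q * (2 - p + h * (1 - q))) :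
    ∃ ε > 0, ∀ a b t : ℝ, |a - p| < ε → |b - q| < ε → |t| < ε →
      1 ≤ balancingShift h a b t ∧ balancingShift h a b t ≤ 2 ∧
        a * (1 - t) < (balancingShift h a b t + h) * b := by
  have hβ : Continuous fun v : ℝ × ℝ × ℝ => balancingShift h v.1 v.2.1 v.2.2 := by
    unfold balancingShift; fun_prop
  have hlhs : Continuous fun v : ℝ × ℝ × ℝ => v.1 * (1 - v.2.2) := by fun_prop
  have hrhs : Continuous fun v : ℝ × ℝ × ℝ => (balancingShift h v.1 v.2.1 v.2.2 + h) * v.2.1 :=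
    (hβ.add continuous_const).mul (by fun_prop)
  have h1 : ∀ᶠ v in 𝓝 ((p, q, 0) : ℝ × ℝ × ℝ), 1 < balancingShift h v.1 v.2.1 v.2.2 :=
    continuousAt_const.eventually_lt hβ.continuousAt (by simp [balancingShift]; linarith)
  have h2 : ∀ᶠ v in 𝓝 ((p, q, 0) : ℝ × ℝ × ℝ), balancingShift h v.1 v.2.1 v.2.2 < 2 :=
    hβ.continuousAt.eventually_lt continuousAt_const (by simp [balancingShift]; linarith)
  have h3 : ∀ᶠ v in 𝓝 ((p, q, 0) : ℝ × ℝ × ℝ),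
      v.1 * (1 - v.2.2) < (balancingShift h v.1 v.2.1 v.2.2 + h) * v.2.1 :=
    hlhs.continuousAt.eventually_lt hrhs.continuousAt (by simp [balancingShift]; linarith)
  obtain ⟨ε, hε, hball⟩ := Metric.eventually_nhds_iff.1 (h1.and (h2.and h3))
  refine ⟨ε, hε, fun a b t ha hb ht => ?_⟩
  obtain ⟨h1, h2, h3⟩ := hball (y := (a, b, t)) <| by
    simpa [Prod.dist_eq, Real.dist_eq] using max_lt ha (max_lt hb ht)
  exact ⟨h1.le, h2.le, h3⟩

lemma lt_mul_three_sub_sub_of_root_lt {p q : ℝ} (hp1 : p < 1) (hq1 : q < 1)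
    (hq : (3 - p - √((3 - p) ^ 2 - 4 * p)) / 2 < q) : p < q * (3 - p - q) := by
  have : (3 - p - 2 * q) ^ 2 < (3 - p) ^ 2 - 4 * p :=
    (Real.lt_sqrt (by linarith)).1 (by linarith)
  nlinarith

lemma exists_perturbation_weight {p q : ℝ} (hp1 : p < 1) (hq0 : 0 < q) (hq1 : q < 1)
    (hroot : p < q * (3 - p - q)) (hlin : 2 * p - 1 < q) :
    ∃ h : ℝ, 0 ≤ h ∧ h ≤ 1 ∧ p + h * q < 1 ∧ p < q * (2 - p + h * (1 - q)) := by
  have hq' : 0 < q * (1 - q) := mul_pos hq0 (by linarith)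
  obtain ⟨h, hlo, hhi⟩ : ∃ h, max 0 ((p - q * (2 - p)) / (q * (1 - q))) < h ∧
      h < min 1 ((1 - p) / q) := by
    refine exists_between (max_lt (lt_min one_pos (div_pos (by linarith) hq0)) (lt_min ?_ ?_))
    · rw [div_lt_one hq']
      linarith
    · rw [div_lt_div_iff₀ hq' hq0]
      nlinarith
  rw [max_lt_iff, div_lt_iff₀ hq'] at hlo
  rw [lt_min_iff, lt_div_iff₀ hq0] at hhi
  exact ⟨h, hlo.1.le, hhi.1.le, by linarith, by linarith⟩

/-- Let `p, q ∈ (0,1)` be constants with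
`q > max{(3 - p - √((3-p)² - 4p))/2, 2p - 1}`.  Then, with high probability (as
`n = 2m → ∞` along even `n`), for `G` drawn from the stochastic block model
`𝒢_{n,p,q}` the metric LP relaxation fails to recover the planted bisection. -/
theorem sbm_lp_nonrecovery_very_dense (p q : ℝ)
    (hp0 : 0 < p) (hp1 : p < 1) (hq0 : 0 < q) (hq1 : q < 1)
    (hq : q > max ((3 - p - Real.sqrt ((3 - p) ^ 2 - 4 * p)) / 2) (2 * p - 1)) :
    Tendsto (fun m : ℕ =>
      graphMeasure (2 * m) (sbmPe (2 * m) p q)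
        {ω | ¬ LPrecovers (2 * m) (graphOf ω)})
      atTop (nhds 1) := by
  rw [gt_iff_lt, max_lt_iff] at hq
  obtain ⟨h, hh0, hh1, hcut, hgain⟩ := exists_perturbation_weight hp1 hq0 hq1
    (lt_mul_three_sub_sub_of_root_lt hp1 hq1 hq.1) (by linarith)
  obtain ⟨ε, hε, hmargin⟩ := exists_pos_balancingShift_bounds (by positivity) hcut hgain
  unfold graphMeasure
  refine tendsto_measure_one_of_compl_union_subset
    (tendsto_measure_abs_countTrue_div_sub_ge _ _ (fun m _ => sbmPe_of_mem_withinPairs p q)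
      hp0.le hp1.le tendsto_card_withinPairs hε)
    (tendsto_measure_abs_countTrue_div_sub_ge _ _ (fun m _ => sbmPe_of_mem_crossPairs p q)
      hq0.le hq1.le tendsto_card_crossPairs hε) ?_
  filter_upwards [eventually_ge_atTop 2,
    tendsto_one_div_atTop_nhds_zero_nat.eventually (gt_mem_nhds hε)] with m hm hmε ω hω
  simp only [Set.mem_compl_iff, Set.mem_union, Set.mem_ofPred_eq, not_or, not_le] at hω
  obtain ⟨hβ1, hβ2, hlt⟩ :=
    hmargin _ _ (1 / m) hω.1 hω.2 (by rwa [abs_of_nonneg (by positivity)])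
  exact not_LPrecovers_graphOf_of_balancingShift hm ω hh0 hh1 rfl rfl hβ1 hβ2 hlt
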